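/- arXiv:2105.14423 — 3 statements merged into one kernel-verified Lean document; each statement's English description precedes it below -/
import Mathlib

section
/- Fix 0 ≤ i ≤ n and a threshold τ. Let A and A' be finsets of items contained in [i] with card A = card A' and ⋃_{j∈A} S j = ⋃_{j∈A'} S j. Then for every finset B of items disjoint from [i] (i.e., B ⊆ {i,…,n−1}), the package A ∪ B is qualified if and only if the package A' ∪ B is qualified, where a package P is qualified iff card P = K and fair(P) ≥ τ. -/
/-- The finset of the first `i` items among `Fin n`, i.e. `{0, …, i−1}`. -/
def firstItems (n i : ℕ) : Finset (Fin n) :=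
  Finset.univ.filter (fun j => (j : ℕ) < i)

open Finset

theorem stmt_4_general (n K τ : ℕ) (G : Type) [DecidableEq G]
    (S : Fin n → Finset G) (i : ℕ)
    (A A' : Finset (Fin n))
    (hA : A ⊆ firstItems n i) (hA' : A' ⊆ firstItems n i)
    (hcard : A.card = A'.card)
    (hunion : A.biUnion S = A'.biUnion S) :
    ∀ B : Finset (Fin n), Disjoint B (firstItems n i) →
      (((A ∪ B).card = K ∧ τ ≤ ((A ∪ B).biUnion S).card) ↔
        ((A' ∪ B).card = K ∧ τ ≤ ((A' ∪ B).biUnion S).card)) := by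
  intro B hB
  have hAB : Disjoint A B := (hB.mono_right hA).symm
  have hA'B : Disjoint A' B := (hB.mono_right hA').symm
  rw [card_union_of_disjoint hAB, card_union_of_disjoint hA'B, hcard,
    union_biUnion, union_biUnion, hunion]

theorem stmt_4 (n K τ : ℕ) (G : Type) [Fintype G] [DecidableEq G]
    (S : Fin n → Finset G) (i : ℕ) (hi : i ≤ n)
    (A A' : Finset (Fin n))
    (hA : A ⊆ firstItems n i) (hA' : A' ⊆ firstItems n i)
    (hcard : A.card = A'.card)
    (hunion : A.biUnion S = A'.biUnion S) :
    ∀ B : Finset (Fin n), Disjoint B (firstItems n i) →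
      (((A ∪ B).card = K ∧ τ ≤ ((A ∪ B).biUnion S).card) ↔
        ((A' ∪ B).card = K ∧ τ ≤ ((A' ∪ B).biUnion S).card)) :=
  stmt_4_general n K τ G S i A A' hA hA' hcard hunion
end

section
/- Fix 0 ≤ i ≤ n and a threshold τ, and let g = Fintype.card G. Define an equivalence relation on finsets A ⊆ [i] by: A ≈ A' iff for every finset B of items disjoint from [i], the package A ∪ B is qualified exactly when A' ∪ B is qualified (a package P is qualified iff card P = K and fair(P) ≥ τ). Then the number of equivalence classes of ≈ on the powerset of [i] is at most (K+1)·2^g + 1. -/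
/-- The equivalence relation on subsets of `[i]`: `A ≈ A'` iff for every
finset `B` of items disjoint from `[i]`, the package `A ∪ B` is qualified
(i.e. has `K` items and fairness at least `τ`) exactly when `A' ∪ B` is. -/
def pkgSetoid (n K τ i : ℕ) {G : Type} [DecidableEq G] (S : Fin n → Finset G) :
    Setoid {A : Finset (Fin n) // A ⊆ firstItems n i} where
  r A A' := ∀ B : Finset (Fin n), Disjoint B (firstItems n i) →
    (((A.1 ∪ B).card = K ∧ τ ≤ ((A.1 ∪ B).biUnion S).card) ↔
      ((A'.1 ∪ B).card = K ∧ τ ≤ ((A'.1 ∪ B).biUnion S).card))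
  iseqv :=
    ⟨fun _ _ _ => Iff.rfl,
     fun h B hB => (h B hB).symm,
     fun h h' B hB => (h B hB).trans (h' B hB)⟩

/-!
Whether `A ∪ B` is qualified, for `B` disjoint from `[i]`, depends on `A` only through `card A`
and the set `⋃_{j∈A} S j` of members it satisfies, since then `card (A ∪ B) = card A + card B`
and `⋃_{j∈A∪B} S j = (⋃_{j∈A} S j) ∪ (⋃_{j∈B} S j)`. Moreover, when `card A > K` no `A ∪ B` is
qualified. So `A ↦ (card A, ⋃_{j∈A} S j)` for `card A ≤ K`, and a single extra value otherwise,
separates the classes, and it takes at most `(K + 1) · 2^g + 1` values.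
-/

theorem Setoid.natCard_quotient_le_of_eq_imp_rel {α β : Type*} [Finite β] {s : Setoid α}
    (f : α → β) (hf : ∀ a b, f a = f b → s a b) : Nat.card (Quotient s) ≤ Nat.card β := by
  refine Nat.card_le_card_of_injective (fun q => f q.out) fun q q' h => ?_
  rw [← q.out_eq, ← q'.out_eq]
  exact Quotient.sound (hf _ _ h)

section Signature

variable {α G : Type*} [DecidableEq G]

def pkgSignature (K : ℕ) (S : α → Finset G) (A : Finset α) : Option (Fin (K + 1) × Finset G) :=
  if h : A.card ≤ K then some (⟨A.card, Nat.lt_succ_of_le h⟩, A.biUnion S) else none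

theorem card_eq_and_biUnion_eq_of_pkgSignature_eq_some {K : ℕ} {S : α → Finset G}
    {A A' : Finset α} {c : Fin (K + 1)} {U : Finset G}
    (hA : pkgSignature K S A = some (c, U)) (hA' : pkgSignature K S A' = some (c, U)) :
    A.card = A'.card ∧ A.biUnion S = A'.biUnion S := by
  unfold pkgSignature at hA hA'
  split_ifs at hA hA'
  simp only [Option.some.injEq, Prod.mk.injEq] at hA hA'
  exact ⟨Fin.mk.inj_iff.mp (hA.1.trans hA'.1.symm), hA.2.trans hA'.2.symm⟩

theorem lt_card_of_pkgSignature_eq_none {K : ℕ} {S : α → Finset G} {A : Finset α}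
    (hA : pkgSignature K S A = none) : K < A.card := by
  unfold pkgSignature at hA
  split_ifs at hA with h
  exact not_le.mp h

end Signature

theorem pkgSetoid_rel_of_pkgSignature_eq {n K τ i : ℕ} {G : Type} [DecidableEq G]
    {S : Fin n → Finset G} (A A' : {A : Finset (Fin n) // A ⊆ firstItems n i})
    (h : pkgSignature K S A.1 = pkgSignature K S A'.1) : pkgSetoid n K τ i S A A' := by
  intro B hB
  have hAB : Disjoint A.1 B := (hB.mono_right A.2).symm
  have hA'B : Disjoint A'.1 B := (hB.mono_right A'.2).symm
  cases hsig : pkgSignature K S A'.1 with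
  | none =>
    have hlt := lt_card_of_pkgSignature_eq_none (h.trans hsig)
    have hlt' := lt_card_of_pkgSignature_eq_none hsig
    have := Finset.card_le_card (Finset.subset_union_left (s₁ := A.1) (s₂ := B))
    have := Finset.card_le_card (Finset.subset_union_left (s₁ := A'.1) (s₂ := B))
    constructor <;> rintro ⟨hK, -⟩ <;> omega
  | some p =>
    obtain ⟨hcard, hbiUnion⟩ :=
      card_eq_and_biUnion_eq_of_pkgSignature_eq_some (h.trans hsig) hsig
    rw [Finset.card_union_of_disjoint hAB, Finset.card_union_of_disjoint hA'B,
      Finset.union_biUnion, Finset.union_biUnion, hcard, hbiUnion]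

theorem stmt_5_general (n K τ i : ℕ) (G : Type) [Fintype G] [DecidableEq G]
    (S : Fin n → Finset G) :
    Nat.card (Quotient (pkgSetoid n K τ i S)) ≤ (K + 1) * 2 ^ (Fintype.card G) + 1 := by
  have h := Setoid.natCard_quotient_le_of_eq_imp_rel (s := pkgSetoid n K τ i S)
    (fun A => pkgSignature K S A.1) (pkgSetoid_rel_of_pkgSignature_eq (τ := τ))
  simpa using h

theorem stmt_5 (n K τ i : ℕ) (G : Type) [Fintype G] [DecidableEq G]
    (S : Fin n → Finset G) (hi : i ≤ n) :
    Nat.card (Quotient (pkgSetoid n K τ i S)) ≤ (K + 1) * 2 ^ (Fintype.card G) + 1 :=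
  stmt_5_general n K τ i G S
end

section
/- Fix m ≥ 1. For every 1 ≤ i ≤ n, every 1 ≤ k, and every capped count vector H : G → ℕ with H u ≤ m for all u, the following recurrence holds: Q_m(i,k,H) if and only if Q_m(i−1,k,H) or there exists a capped count vector F : G → ℕ with F u ≤ m for all u such that Q_m(i−1,k−1,F) and, for every member u, H u = min(m, F u + (1 if u ∈ S i else 0)). -/
/-- `Qm n S m i k H` : there exists a package `P ⊆ [i]` with `card P = k` such
that for every member `u`, `H u` is the number of items of `P` satisfying `u`,
capped at `m`. -/
def Qm (n : ℕ) {G : Type} [DecidableEq G] (S : Fin n → Finset G)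
    (m i k : ℕ) (H : G → ℕ) : Prop :=
  ∃ P : Finset (Fin n), P ⊆ firstItems n i ∧ P.card = k ∧
    ∀ u : G, H u = min m ((P.filter (fun j => u ∈ S j)).card)

/-
Sort the packages `P ⊆ [i]` by whether they contain the last item `x = i − 1`. Those that do not
are exactly the packages of `[i − 1]`; those that do are `insert x P'` with `P' ⊆ [i − 1]`, and adding
`x` raises each member's count by one if `x` satisfies them. Capping commutes with this step, since
`min m (min m c + b) = min m (c + b)`, so the capped vector of `insert x P'` is determined by that
of `P'`.
-/

namespace Finset

theorem card_filter_insert_of_notMem {α : Type*} [DecidableEq α] (p : α → Prop) [DecidablePred p]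
    {s : Finset α} {a : α} (ha : a ∉ s) :
    #{x ∈ insert a s | p x} = #{x ∈ s | p x} + if p a then 1 else 0 := by
  rw [card_filter, card_filter, sum_insert ha, add_comm]

end Finset

open Finset

section FirstItems

variable {n : ℕ}

@[simp]
theorem mem_firstItems {i : ℕ} {j : Fin n} : j ∈ firstItems n i ↔ (j : ℕ) < i := by
  simp [firstItems]

theorem firstItems_mono {i i' : ℕ} (h : i ≤ i') : firstItems n i ⊆ firstItems n i' := by
  intro j
  simp only [mem_firstItems]
  omega

theorem self_notMem_firstItems (x : Fin n) : x ∉ firstItems n x := by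
  simp

theorem firstItems_succ (x : Fin n) : firstItems n (x + 1) = insert x (firstItems n x) := by
  ext j
  simp only [mem_firstItems, mem_insert, Fin.ext_iff]
  omega

end FirstItems

section Recurrence

variable {n : ℕ} {G : Type} [DecidableEq G] (S : Fin n → Finset G) (m : ℕ)

theorem Qm_mono {i i' k : ℕ} {H : G → ℕ} (h : i ≤ i') (hQ : Qm n S m i k H) :
    Qm n S m i' k H :=
  let ⟨P, hP, hcard, hcount⟩ := hQ
  ⟨P, hP.trans (firstItems_mono h), hcard, hcount⟩

theorem Qm_of_succ_of_notMem {x : Fin n} {k : ℕ} {H : G → ℕ} {P : Finset (Fin n)}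
    (hP : P ⊆ firstItems n (x + 1)) (hx : x ∉ P) (hcard : P.card = k)
    (hcount : ∀ u, H u = min m #{j ∈ P | u ∈ S j}) : Qm n S m x k H := by
  rw [firstItems_succ, subset_insert_iff, erase_eq_of_notMem hx] at hP
  exact ⟨P, hP, hcard, hcount⟩

theorem Qm_of_succ_of_mem {x : Fin n} {k : ℕ} {H : G → ℕ} {P : Finset (Fin n)}
    (hP : P ⊆ firstItems n (x + 1)) (hx : x ∈ P) (hcard : P.card = k + 1)
    (hcount : ∀ u, H u = min m #{j ∈ P | u ∈ S j}) :
    ∃ F : G → ℕ, (∀ u, F u ≤ m) ∧ Qm n S m x k F ∧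
      ∀ u, H u = min m (F u + if u ∈ S x then 1 else 0) := by
  rw [firstItems_succ, subset_insert_iff] at hP
  refine ⟨fun u => min m #{j ∈ P.erase x | u ∈ S j}, fun u => min_le_left _ _,
    ⟨P.erase x, hP, by rw [card_erase_of_mem hx, hcard]; rfl, fun u => rfl⟩, fun u => ?_⟩
  have hsplit := card_filter_insert_of_notMem (fun j => u ∈ S j) (notMem_erase x P)
  rw [insert_erase hx] at hsplit
  rw [hcount, hsplit]
  dsimp only
  omega

theorem Qm_succ_of_insert {x : Fin n} {k : ℕ} {H F : G → ℕ} (hF : Qm n S m x k F)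
    (hH : ∀ u, H u = min m (F u + if u ∈ S x then 1 else 0)) : Qm n S m (x + 1) (k + 1) H := by
  obtain ⟨P, hP, hcard, hcount⟩ := hF
  have hx : x ∉ P := fun h => self_notMem_firstItems x (hP h)
  refine ⟨insert x P, ?_, by rw [card_insert_of_notMem hx, hcard], fun u => ?_⟩
  · rw [firstItems_succ]
    exact insert_subset_insert x hP
  · rw [hH, hcount, card_filter_insert_of_notMem _ hx]
    omega

theorem Qm_succ_iff (x : Fin n) (k : ℕ) (H : G → ℕ) :
    Qm n S m (x + 1) (k + 1) H ↔
      Qm n S m x (k + 1) H ∨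
        ∃ F : G → ℕ, (∀ u, F u ≤ m) ∧ Qm n S m x k F ∧
          ∀ u, H u = min m (F u + if u ∈ S x then 1 else 0) := by
  constructor
  · rintro ⟨P, hP, hcard, hcount⟩
    by_cases hx : x ∈ P
    · exact Or.inr (Qm_of_succ_of_mem S m hP hx hcard hcount)
    · exact Or.inl (Qm_of_succ_of_notMem S m hP hx hcard hcount)
  · rintro (hQ | ⟨F, -, hF, hH⟩)
    · exact Qm_mono S m (Nat.le_succ _) hQ
    · exact Qm_succ_of_insert S m hF hH

end Recurrence

theorem stmt_7 (n m : ℕ) (G : Type) [DecidableEq G]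
    (S : Fin n → Finset G)
    (i k : ℕ) (h1 : 1 ≤ i) (h2 : i ≤ n) (hk : 1 ≤ k)
    (H : G → ℕ) :
    Qm n S m i k H ↔
      Qm n S m (i - 1) k H ∨
        ∃ F : G → ℕ, (∀ u, F u ≤ m) ∧ Qm n S m (i - 1) (k - 1) F ∧
          ∀ u : G, H u = min m (F u + if u ∈ S ⟨i - 1, by omega⟩ then 1 else 0) := by
  obtain ⟨i, rfl⟩ := Nat.exists_eq_add_of_le' h1
  obtain ⟨k, rfl⟩ := Nat.exists_eq_add_of_le' hk
  simpa using Qm_succ_iff S m ⟨i, by omega⟩ k H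
end
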